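/- Suppose λ, σ², η_d, η_g, p̃, p_i, Δ are positive reals with Δ < p_i, p̃·p_i ≤ 1 (in fact p̃ < p_i and Δ = p_i − N·p̃ for some N ≥ 1). If η_d < 2/λ and η_g < λσ², then with a = λ, b = η_g p̃ Δ/(η_d λ σ²), c = η_g p̃ p_i/(η_d σ²), all of the stability conditions η_d·a < 2, η_d·b < 2, and η_d·c < a + b hold. -/
import Mathlib


/-- Proposition 2 (sufficient condition for stability): if `η_d < 2/λ` and
`η_g < λσ²`, then with `a = λ`, `b = η_g p̃ Δ/(η_d λ σ²)`, `c = η_g p̃ p_i/(η_d σ²)`,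
the stability conditions `η_d a < 2`, `η_d b < 2`, `η_d c < a + b` all hold. -/
theorem sufficient_condition_for_stability
    (lam σ2 ηd ηg pt pi Δ : ℝ)
    (hlam : 0 < lam) (hσ2 : 0 < σ2) (hηd : 0 < ηd) (hηg : 0 < ηg)
    (hpt : 0 < pt) (hpi : 0 < pi) (hΔ : 0 < Δ) (hΔpi : Δ < pi)
    (hptpi : pt * pi ≤ 1) (hptlt : pt < pi)
    (hNex : ∃ N : ℕ, 1 ≤ N ∧ Δ = pi - (N : ℝ) * pt)
    (hηdlam : ηd < 2 / lam) (hηglam : ηg < lam * σ2)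
    (a b c : ℝ)
    (hA : a = lam) (hB : b = ηg * pt * Δ / (ηd * lam * σ2))
    (hC : c = ηg * pt * pi / (ηd * σ2)) :
    ηd * a < 2 ∧ ηd * b < 2 ∧ ηd * c < a + b := by
  subst hA hB hC
  have h1 : ηd * a < 2 := by
    have := (lt_div_iff₀ hlam).mp hηdlam
    linarith
  refine ⟨h1, ?_, ?_⟩
  · -- ηd * b = ηg * pt * Δ / (a * σ2) < 2
    have hden : ηd * a * σ2 > 0 := by positivity
    rw [mul_div_assoc']
    rw [div_lt_iff₀ hden]
    have hΔ1 : pt * Δ < 1 := lt_of_lt_of_le (by nlinarith) hptpi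
    have h2 : ηg * pt * Δ < a * σ2 := by nlinarith
    have h3 : ηd * (ηg * pt * Δ) < ηd * (a * σ2) := by
      exact mul_lt_mul_of_pos_left h2 hηd
    nlinarith [mul_pos hηd (mul_pos hlam hσ2)]
  · have hden : ηd * σ2 > 0 := by positivity
    have hden2 : ηd * a * σ2 > 0 := by positivity
    have hb : 0 < ηg * pt * Δ / (ηd * a * σ2) := by positivity
    have key : ηd * (ηg * pt * pi / (ηd * σ2)) < a := by
      rw [mul_div_assoc', div_lt_iff₀ hden]
      have h2 : ηg * (pt * pi) < a * σ2 * 1 := by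
        calc ηg * (pt * pi) ≤ ηg * 1 := by nlinarith
        _ < a * σ2 * 1 := by linarith
      nlinarith
    linarith
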